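/- (Monotonicity of the majority probability in the sample size, removing the parity assumption.) Let p₁ ∈ [1/2, 1] and p₂ = 1 − p₁. For a positive integer L, define M₁(L) = Pr(X_L > L/2) + (1/2)·Pr(X_L = L/2) and M₂(L) = Pr(X_L < L/2) + (1/2)·Pr(X_L = L/2), where X_L is a binomial random variable with L trials and success probability p₁ (note Pr(X_L = L/2) = 0 when L is odd). Then for every odd positive integer ℓ: M₁(ℓ) = M₁(ℓ+1) ≤ M₁(ℓ+2) and M₂(ℓ) = M₂(ℓ+1) ≥ M₂(ℓ+2). -/
import Mathlib


open scoped BigOperators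

/-- `Pr(X_L = h)` for a binomial random variable with `L` trials and success
probability `p`. -/
noncomputable def binPr (p : ℝ) (L h : ℕ) : ℝ :=
  (L.choose h : ℝ) * p ^ h * (1 - p) ^ (L - h)

/-- `M₁(L) = Pr(X_L > L/2) + (1/2) Pr(X_L = L/2)`: the probability that value 1
wins the majority (with a fair coin flip on ties) among `L` i.i.d. two-valued
observations equal to 1 with probability `p`. -/
noncomputable def M₁ (p : ℝ) (L : ℕ) : ℝ :=
  (∑ h ∈ Finset.range (L + 1), if L < 2 * h then binPr p L h else 0) +
    1 / 2 * ∑ h ∈ Finset.range (L + 1), if 2 * h = L then binPr p L h else 0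

/-- `M₂(L) = Pr(X_L < L/2) + (1/2) Pr(X_L = L/2)`: the probability that value 2
wins the majority (with a fair coin flip on ties). -/
noncomputable def M₂ (p : ℝ) (L : ℕ) : ℝ :=
  (∑ h ∈ Finset.range (L + 1), if 2 * h < L then binPr p L h else 0) +
    1 / 2 * ∑ h ∈ Finset.range (L + 1), if 2 * h = L then binPr p L h else 0

/-- The upper-tail sum `Pr(X_L ≥ k)`. -/
noncomputable def Tl (p : ℝ) (L k : ℕ) : ℝ := ∑ h ∈ Finset.Ico k (L+1), binPr p L h

lemma binPr_nonneg (p : ℝ) (h0 : 0 ≤ p) (h1 : p ≤ 1) (L h : ℕ) : 0 ≤ binPr p L h := by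
  have : (0:ℝ) ≤ 1 - p := by linarith
  unfold binPr
  positivity

lemma binPr_succ (p : ℝ) (L h : ℕ) :
    binPr p (L+1) (h+1) = p * binPr p L h + (1-p) * binPr p L (h+1) := by
  unfold binPr
  rcases le_or_gt (h+1) L with hle | hlt
  · have ha : L - h = L - (h+1) + 1 := by omega
    have hb : L + 1 - (h+1) = L - (h+1) + 1 := by omega
    rw [Nat.choose_succ_succ, hb, ha]
    push_cast
    ring
  · rcases Nat.lt_or_ge L h with h2 | h2
    · rw [Nat.choose_eq_zero_of_lt (by omega), Nat.choose_eq_zero_of_lt (by omega),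
        Nat.choose_eq_zero_of_lt (by omega)]
      simp
    · have : h = L := by omega
      subst this
      rw [Nat.choose_eq_zero_of_lt (Nat.lt_succ_self _)]
      simp [Nat.choose_self]
      ring

lemma binPr_top (p : ℝ) (L : ℕ) : binPr p L (L+1) = 0 := by
  unfold binPr
  rw [Nat.choose_eq_zero_of_lt (Nat.lt_succ_self _)]
  simp

lemma Tl_succ (p : ℝ) (L k : ℕ) :
    Tl p (L+1) (k+1) = p * Tl p L k + (1-p) * Tl p L (k+1) := by
  unfold Tl
  have h1 : ∑ h ∈ Finset.Ico (k+1) (L+1+1), binPr p (L+1) h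
      = ∑ h ∈ Finset.Ico k (L+1), binPr p (L+1) (h+1) := by
    rw [Finset.sum_Ico_eq_sum_range, Finset.sum_Ico_eq_sum_range]
    rw [show L + 1 + 1 - (k+1) = L + 1 - k from by omega]
    exact Finset.sum_congr rfl fun i _ => by rw [show k + 1 + i = k + i + 1 from by omega]
  rw [h1, Finset.sum_congr rfl fun h _ => binPr_succ p L h, Finset.sum_add_distrib,
    ← Finset.mul_sum, ← Finset.mul_sum]
  congr 1
  congr 1
  rcases le_or_gt k L with hk | hk
  · have h2 : ∑ h ∈ Finset.Ico k (L+1), binPr p L (h+1)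
        = ∑ h ∈ Finset.Ico (k+1) (L+1+1), binPr p L h := by
      rw [Finset.sum_Ico_eq_sum_range, Finset.sum_Ico_eq_sum_range]
      rw [show L + 1 + 1 - (k+1) = L + 1 - k from by omega]
      exact Finset.sum_congr rfl fun i _ => by rw [show k + 1 + i = k + i + 1 from by omega]
    rw [h2, Finset.sum_Ico_succ_top (by omega), binPr_top, add_zero]
  · rw [Finset.Ico_eq_empty (by omega), Finset.Ico_eq_empty (by omega)]
    simp

lemma Tl_zero (p : ℝ) (L : ℕ) : Tl p L 0 = 1 := by
  unfold Tl
  rw [show Finset.Ico 0 (L+1) = Finset.range (L+1) from by ext x; simp]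
  calc ∑ h ∈ Finset.range (L+1), binPr p L h
      = ∑ h ∈ Finset.range (L+1), p^h * (1-p)^(L-h) * ((L.choose h : ℕ) : ℝ) := by
        exact Finset.sum_congr rfl fun h _ => by unfold binPr; ring
    _ = (p + (1-p))^L := (add_pow p (1-p) L).symm
    _ = 1 := by norm_num

lemma Tl_bot (p : ℝ) (L k : ℕ) (hk : k < L + 1) :
    Tl p L k = binPr p L k + Tl p L (k+1) := by
  unfold Tl
  rw [Finset.sum_eq_sum_Ico_succ_bot hk]

lemma M1_odd (p : ℝ) (m : ℕ) : M₁ p (2*m+1) = Tl p (2*m+1) (m+1) := by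
  unfold M₁ Tl
  have h1 : (∑ h ∈ Finset.range (2*m+1+1), if 2*m+1 < 2*h then binPr p (2*m+1) h else 0)
      = ∑ h ∈ Finset.Ico (m+1) (2*m+1+1), binPr p (2*m+1) h := by
    rw [← Finset.sum_filter]
    apply Finset.sum_congr _ fun _ _ => rfl
    ext x
    simp only [Finset.mem_filter, Finset.mem_range, Finset.mem_Ico]
    omega
  have h2 : (∑ h ∈ Finset.range (2*m+1+1), if 2*h = 2*m+1 then binPr p (2*m+1) h else 0) = 0 :=
    Finset.sum_eq_zero fun x _ => by rw [if_neg (by omega)]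
  rw [h1, h2]
  ring

lemma M1_even (p : ℝ) (m : ℕ) :
    M₁ p (2*m+2) = Tl p (2*m+2) (m+2) + 1/2 * binPr p (2*m+2) (m+1) := by
  unfold M₁ Tl
  have h1 : (∑ h ∈ Finset.range (2*m+2+1), if 2*m+2 < 2*h then binPr p (2*m+2) h else 0)
      = ∑ h ∈ Finset.Ico (m+2) (2*m+2+1), binPr p (2*m+2) h := by
    rw [← Finset.sum_filter]
    apply Finset.sum_congr _ fun _ _ => rfl
    ext x
    simp only [Finset.mem_filter, Finset.mem_range, Finset.mem_Ico]
    omega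
  have h2 : (∑ h ∈ Finset.range (2*m+2+1), if 2*h = 2*m+2 then binPr p (2*m+2) h else 0)
      = binPr p (2*m+2) (m+1) := by
    rw [← Finset.sum_filter]
    rw [show (Finset.range (2*m+2+1)).filter (fun h => 2*h = 2*m+2) = {m+1} from by
      ext x; simp only [Finset.mem_filter, Finset.mem_range, Finset.mem_singleton]; omega]
    simp
  rw [h1, h2]

lemma M_total (p : ℝ) (L : ℕ) : M₁ p L + M₂ p L = 1 := by
  unfold M₁ M₂
  have key : ∀ h ∈ Finset.range (L+1),
      ((if L < 2*h then binPr p L h else 0) + (if 2*h < L then binPr p L h else 0))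
        + (if 2*h = L then binPr p L h else 0) = binPr p L h := by
    intro h _
    rcases lt_trichotomy (2*h) L with hc | hc | hc
    · rw [if_neg (by omega), if_pos hc, if_neg (by omega)]; ring
    · rw [if_neg (by omega), if_neg (by omega), if_pos hc]; ring
    · rw [if_pos hc, if_neg (by omega), if_neg (by omega)]; ring
  have h1 : ∑ h ∈ Finset.range (L+1), binPr p L h = 1 := by
    have := Tl_zero p L
    unfold Tl at this
    rwa [show Finset.Ico 0 (L+1) = Finset.range (L+1) from by ext x; simp] at this
  have h2 := Finset.sum_congr rfl key
  rw [Finset.sum_add_distrib, Finset.sum_add_distrib, h1] at h2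
  linarith

lemma binPr_cancel (p : ℝ) (m : ℕ) :
    p * binPr p (2*m+1) m = (1-p) * binPr p (2*m+1) (m+1) := by
  unfold binPr
  have hc : (2*m+1).choose m = (2*m+1).choose (m+1) := by
    rw [← Nat.choose_symm (by omega : m+1 ≤ 2*m+1)]
    congr 1
    omega
  rw [hc, show 2*m+1 - m = m+1 from by omega, show 2*m+1 - (m+1) = m from by omega]
  ring

lemma M1_eq (p : ℝ) (m : ℕ) : M₁ p (2*m+1) = M₁ p (2*m+2) := by
  have hA : M₁ p (2*m+2) = p * Tl p (2*m+1) (m+1) + (1-p) * Tl p (2*m+1) (m+2)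
      + 1/2 * (p * binPr p (2*m+1) m + (1-p) * binPr p (2*m+1) (m+1)) := by
    rw [M1_even, show 2*m+2 = (2*m+1)+1 from by omega,
      show m+2 = (m+1)+1 from rfl, Tl_succ, show m+1 = m+0+1 from rfl, binPr_succ]
  have hB := M1_odd p m
  have hC := Tl_bot p (2*m+1) (m+1) (by omega)
  have hD := binPr_cancel p m
  rw [hA, hB, hC, hD]
  ring
  
lemma M1_le (p : ℝ) (m : ℕ) (h0 : 1/2 ≤ p) (h1 : p ≤ 1) :
    M₁ p (2*m+2) ≤ M₁ p (2*m+3) := by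
  have hA : M₁ p (2*m+3) = p * Tl p (2*m+2) (m+1) + (1-p) * Tl p (2*m+2) (m+2) := by
    rw [show 2*m+3 = 2*(m+1)+1 from by omega, M1_odd,
      show 2*(m+1)+1 = (2*m+2)+1 from by omega, show m+1+1 = m+2 from rfl,
      show m+2 = (m+1)+1 from rfl, Tl_succ]
  have hC := Tl_bot p (2*m+2) (m+1) (by omega)
  have hB := M1_even p m
  have hnn := binPr_nonneg p (by linarith) h1 (2*m+2) (m+1)
  rw [hA, hB, hC]
  nlinarith [mul_nonneg (by linarith : (0:ℝ) ≤ p - 1/2) hnn]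

/-- **Monotonicity of the majority probability in the sample size.** For
`p₁ ∈ [1/2, 1]` and every odd positive `ℓ`:
`M₁(ℓ) = M₁(ℓ+1) ≤ M₁(ℓ+2)` and `M₂(ℓ) = M₂(ℓ+1) ≥ M₂(ℓ+2)`. -/
theorem majority_prob_monotone (p₁ : ℝ) (hp₁ : 1 / 2 ≤ p₁) (hp₁' : p₁ ≤ 1)
    (ℓ : ℕ) (hℓ : 0 < ℓ) (hodd : Odd ℓ) :
    (M₁ p₁ ℓ = M₁ p₁ (ℓ + 1) ∧ M₁ p₁ (ℓ + 1) ≤ M₁ p₁ (ℓ + 2)) ∧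
    (M₂ p₁ ℓ = M₂ p₁ (ℓ + 1) ∧ M₂ p₁ (ℓ + 2) ≤ M₂ p₁ (ℓ + 1)) := by
  obtain ⟨m, hm⟩ := hodd
  subst hm
  have e1 : 2*m+1+1 = 2*m+2 := by omega
  have e2 : 2*m+1+2 = 2*m+3 := by omega
  rw [e1, e2]
  have k1 := M1_eq p₁ m
  have k2 := M1_le p₁ m hp₁ hp₁'
  have t1 := M_total p₁ (2*m+1)
  have t2 := M_total p₁ (2*m+2)
  have t3 := M_total p₁ (2*m+3)
  exact ⟨⟨k1, k2⟩, ⟨by linarith, by linarith⟩⟩
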